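/- Let P be a finite set of players, Γ = (P, E) a graph, 𝒜 a monotone family of subsets of P. Suppose: (i) the intersection of all vertex covers of Γ belonging to 𝒜 is empty (no cheater can be identified); (ii) there are players a (Alice) and b (Bob) and disjoint sets A, B ∈ 𝒜, both maximal in 𝒜, such that the neighborhood of a in Γ is exactly A and the neighborhood of b in Γ is exactly B, and {a, b} ∈ E. Then b ∈ A, a ∈ B, and every edge of Γ joins a vertex of A to a vertex of B. -/
import Mathlib


/-- Remark "onlytwo": if no cheater can be identified and Alice, Bob are in
conflict with disjoint maximal sets `A, B ∈ 𝒜` respectively, then `b ∈ A`,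
`a ∈ B`, and every conflict joins a vertex of `A` to a vertex of `B`. -/
theorem conflicts_between_two_maximal_collusions
    {V : Type*} [Fintype V] (G : SimpleGraph V) (𝒜 : Set (Set V))
    (hmono : ∀ S' S : Set V, S' ⊆ S → S ∈ 𝒜 → S' ∈ 𝒜)
    (hnoid : ⋂₀ {S : Set V | (∀ x y : V, G.Adj x y → x ∈ S ∨ y ∈ S) ∧ S ∈ 𝒜} = ∅)
    (a b : V) (A B : Set V)
    (hA : A ∈ 𝒜) (hB : B ∈ 𝒜)
    (hAmax : ∀ S ∈ 𝒜, A ⊆ S → S = A)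
    (hBmax : ∀ S ∈ 𝒜, B ⊆ S → S = B)
    (hdisj : Disjoint A B)
    (hNa : G.neighborSet a = A) (hNb : G.neighborSet b = B)
    (hab : G.Adj a b) :
    b ∈ A ∧ a ∈ B ∧
      ∀ x y : V, G.Adj x y → (x ∈ A ∧ y ∈ B) ∨ (x ∈ B ∧ y ∈ A) := by
  have hbA : b ∈ A := by rw [← hNa]; exact hab
  have haB : a ∈ B := by rw [← hNb]; exact hab.symm
  -- For any vertex v whose neighborhood is exactly S (maximal), S is a cover.
  have key : ∀ (v : V) (S : Set V), S ∈ 𝒜 → (∀ T ∈ 𝒜, S ⊆ T → T = S) →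
      G.neighborSet v = S → ∀ x y : V, G.Adj x y → x ∈ S ∨ y ∈ S := by
    intro v S hS hSmax hN
    -- There is a cover in 𝒜 not containing v
    have hv : v ∉ ⋂₀ {C : Set V | (∀ x y : V, G.Adj x y → x ∈ C ∨ y ∈ C) ∧ C ∈ 𝒜} := by
      rw [hnoid]; exact id
    rw [Set.mem_sInter] at hv
    push_neg at hv
    obtain ⟨C, ⟨hCcov, hC𝒜⟩, hvC⟩ := hv
    -- All edges from v go into S, and C covers them without v, so S ⊆ C
    have hSC : S ⊆ C := by
      intro x hx
      have hadj : G.Adj v x := by rw [← hN] at hx; exact hx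
      rcases hCcov v x hadj with h | h
      · exact absurd h hvC
      · exact h
    have : C = S := hSmax C hC𝒜 hSC
    subst this
    exact hCcov
  have hAcov := key a A hA hAmax hNa
  have hBcov := key b B hB hBmax hNb
  refine ⟨hbA, haB, fun x y hxy => ?_⟩
  rcases hAcov x y hxy with hx | hy
  · rcases hBcov x y hxy with hx' | hy'
    · exact absurd hx' (Set.disjoint_left.mp hdisj hx)
    · exact Or.inl ⟨hx, hy'⟩
  · rcases hBcov x y hxy with hx' | hy'
    · exact Or.inr ⟨hx', hy⟩
    · exact absurd hy' (Set.disjoint_left.mp hdisj hy)
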